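/- Let S and A be finite nonempty types, T : S → A → S → ℝ a transition kernel (T s a s' ≥ 0 and ∑_{s'} T s a s' = 1 for all s, a), R : S → A → S → ℝ a reward function, and γ ∈ [0,1). Then there exists a unique function Q : S → A → ℝ satisfying the Bellman optimality equation for reward R, i.e. Q s a = ∑_{s'} T s a s' · (R s a s' + γ · max_{a'} Q s' a') for all s, a. -/
import Mathlib


/-- Maximum of a real-valued function over a finite nonempty type,
taken as `Finset.max'` over `Finset.univ`. -/
noncomputable def fmax {A : Type*} [Fintype A] [Nonempty A] (f : A → ℝ) : ℝ :=
  (Finset.univ.image f).max' (Finset.univ_nonempty.image f)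

lemma le_fmax {A : Type*} [Fintype A] [Nonempty A] (f : A → ℝ) (a : A) :
    f a ≤ fmax f :=
  Finset.le_max' _ _ (Finset.mem_image_of_mem f (Finset.mem_univ a))

lemma fmax_le {A : Type*} [Fintype A] [Nonempty A] {f : A → ℝ} {c : ℝ}
    (h : ∀ a, f a ≤ c) : fmax f ≤ c := by
  apply Finset.max'_le
  intro y hy
  obtain ⟨a, -, rfl⟩ := Finset.mem_image.1 hy
  exact h a

lemma abs_fmax_sub_fmax_le {A : Type*} [Fintype A] [Nonempty A]
    {f g : A → ℝ} {c : ℝ} (h : ∀ a, |f a - g a| ≤ c) :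
    |fmax f - fmax g| ≤ c := by
  rw [abs_sub_le_iff]
  constructor
  · have : fmax f ≤ fmax g + c := by
      apply fmax_le
      intro a
      have := (abs_sub_le_iff.1 (h a)).1
      have := le_fmax g a
      linarith
    linarith
  · have : fmax g ≤ fmax f + c := by
      apply fmax_le
      intro a
      have := (abs_sub_le_iff.1 (h a)).2
      have := le_fmax f a
      linarith
    linarith

/-- For a discount factor `γ ∈ [0,1)`, there exists a unique solution of the
Bellman optimality equation. -/
theorem bellman_solution_exists_unique
    {S A : Type*} [Fintype S] [Nonempty S] [Fintype A] [Nonempty A]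
    (T : S → A → S → ℝ) (hT0 : ∀ s a s', 0 ≤ T s a s')
    (hT1 : ∀ s a, ∑ s', T s a s' = 1)
    (R : S → A → S → ℝ) (γ : ℝ) (hγ0 : 0 ≤ γ) (hγ1 : γ < 1) :
    ∃! Q : S → A → ℝ, ∀ s a, Q s a =
      ∑ s', T s a s' * (R s a s' + γ * fmax (fun a' => Q s' a')) := by
  set B : (S → A → ℝ) → (S → A → ℝ) := fun Q s a =>
    ∑ s', T s a s' * (R s a s' + γ * fmax (fun a' => Q s' a')) with hB
  have key : ∀ Q Q' : S → A → ℝ, dist (B Q) (B Q') ≤ γ * dist Q Q' := by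
    intro Q Q'
    have hd : (0:ℝ) ≤ γ * dist Q Q' := mul_nonneg hγ0 dist_nonneg
    rw [dist_pi_le_iff hd]
    intro s
    rw [dist_pi_le_iff hd]
    intro a
    rw [Real.dist_eq]
    have hsub : B Q s a - B Q' s a
        = ∑ s', T s a s' * (γ * (fmax (fun a' => Q s' a') - fmax (fun a' => Q' s' a'))) := by
      simp only [hB]
      rw [← Finset.sum_sub_distrib]
      congr 1
      ext s'
      ring
    rw [hsub]
    calc |∑ s', T s a s' * (γ * (fmax (fun a' => Q s' a') - fmax (fun a' => Q' s' a')))|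
        ≤ ∑ s', |T s a s' * (γ * (fmax (fun a' => Q s' a') - fmax (fun a' => Q' s' a')))| :=
          Finset.abs_sum_le_sum_abs _ _
      _ ≤ ∑ s', T s a s' * (γ * dist Q Q') := by
          apply Finset.sum_le_sum
          intro s' _
          rw [abs_mul, abs_of_nonneg (hT0 s a s'), abs_mul, abs_of_nonneg hγ0]
          apply mul_le_mul_of_nonneg_left _ (hT0 s a s')
          apply mul_le_mul_of_nonneg_left _ hγ0
          apply abs_fmax_sub_fmax_le
          intro a'
          calc |Q s' a' - Q' s' a'| = dist (Q s' a') (Q' s' a') := (Real.dist_eq _ _).symm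
            _ ≤ dist (Q s') (Q' s') := dist_le_pi_dist _ _ _
            _ ≤ dist Q Q' := dist_le_pi_dist _ _ _
      _ = γ * dist Q Q' := by rw [← Finset.sum_mul, hT1]; ring
  have hlip : LipschitzWith γ.toNNReal B := by
    apply LipschitzWith.of_dist_le_mul
    intro Q Q'
    simpa [Real.coe_toNNReal γ hγ0] using key Q Q'
  have hcontr : ContractingWith γ.toNNReal B := by
    constructor
    · rwa [← NNReal.coe_lt_one, Real.coe_toNNReal γ hγ0]
    · exact hlip
  refine ⟨hcontr.fixedPoint B, ?_, ?_⟩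
  · intro s a
    conv_lhs => rw [← hcontr.fixedPoint_isFixedPt]
  · intro Q hQ
    have hfix : Function.IsFixedPt B Q := by
      funext s a
      exact (hQ s a).symm
    have h1 : dist Q (hcontr.fixedPoint B) ≤ γ * dist Q (hcontr.fixedPoint B) := by
      calc dist Q (hcontr.fixedPoint B) = dist (B Q) (B (hcontr.fixedPoint B)) := by
            rw [hfix, hcontr.fixedPoint_isFixedPt]
        _ ≤ γ * dist Q (hcontr.fixedPoint B) := key _ _
    have h0 : dist Q (hcontr.fixedPoint B) ≥ 0 := dist_nonneg
    have : dist Q (hcontr.fixedPoint B) = 0 := by nlinarith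
    exact dist_eq_zero.1 this
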